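/- For a doubly marked FMC term M^{XO} (carrying two disjoint markings X and O of β-redexes), reducing each marking in turn gives the same result as reducing both simultaneously: (M_X)_O = M_{XO}, where M_X preserves the O-marking through X-reduction and M_{XO} denotes the simultaneous contraction of all redexes marked by X or O. -/

import Mathlib

/-- Terms of the Functional Machine Calculus over a set `A` of locations,
in de Bruijn representation (so terms are automatically identified up to
α-equivalence): nil, variable prefix, push/application on a location,
and pop/abstraction on a location. -/
inductive Tm (A : Type) : Type
  | star : Tm A
  | var  : Nat → Tm A → Tm A
  | push : Tm A → A → Tm A → Tm A
  | pop  : A → Tm A → Tm A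

namespace Tm

variable {A : Type}

/-- Lifting of a renaming under a binder. -/
def liftF (f : Nat → Nat) : Nat → Nat
  | 0 => 0
  | n+1 => f n + 1

/-- Renaming of de Bruijn indices. -/
def rename (f : Nat → Nat) : Tm A → Tm A
  | star => star
  | var n M => var (f n) (rename f M)
  | push N a M => push (rename f N) a (rename f M)
  | pop a M => pop a (rename (liftF f) M)

/-- Capture-avoiding composition `N ; M`. -/
def comp : Tm A → Tm A → Tm A
  | star, P => P
  | var n N, P => var n (comp N P)
  | push Q a N, P => push Q a (comp N P)
  | pop a N, P => pop a (comp N (rename Nat.succ P))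

/-- Lifting of a substitution under a binder. -/
def liftS (σ : Nat → Tm A) : Nat → Tm A
  | 0 => var 0 star
  | n+1 => rename Nat.succ (σ n)

/-- Capture-avoiding simultaneous substitution; note
`{N/x}(x.M) = N ; {N/x}M`. -/
def subst (σ : Nat → Tm A) : Tm A → Tm A
  | star => star
  | var n M => comp (σ n) (subst σ M)
  | push N a M => push (subst σ N) a (subst σ M)
  | pop a M => pop a (subst (liftS σ) M)

/-- Capture-avoiding substitution `{N/x}M` of `N` for the variable
bound immediately outside `M`. -/
def subst1 (N : Tm A) : Tm A → Tm A :=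
  subst (fun n => match n with | 0 => N | n+1 => var n star)

end Tm

/-- Head contexts `H ::= {} | [M]a.H | a<x>.H`. -/
inductive Hd (A : Type) : Type
  | hole : Hd A
  | push : Tm A → A → Hd A → Hd A
  | pop  : A → Hd A → Hd A

namespace Hd

variable {A : Type}

/-- Plugging a term into the hole of a head context (binders of `H` capture). -/
def plug : Hd A → Tm A → Tm A
  | hole, M => M
  | push N a H, M => Tm.push N a (plug H M)
  | pop a H, M => Tm.pop a (plug H M)

/-- The number of binders of a head context. -/
def binders : Hd A → Nat
  | hole => 0
  | push _ _ H => binders H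
  | pop _ H => binders H + 1

/-- The locations occurring along the spine of a head context. -/
def locs : Hd A → List A
  | hole => []
  | push _ a H => a :: locs H
  | pop a H => a :: locs H

end Hd

mutual
/-- Redex-marked FMC terms: a term together with a selection of marked
β-redexes, represented by the `redex` constructor `[N]a✓.H.✓a<x>.M`. -/
inductive MTm (A : Type) : Type
  | star : MTm A
  | var  : Nat → MTm A → MTm A
  | push : MTm A → A → MTm A → MTm A
  | pop  : A → MTm A → MTm A
  | redex : MTm A → A → MHd A → MTm A → MTm A
/-- Head contexts of redex-marked terms. -/
inductive MHd (A : Type) : Type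
  | hole : MHd A
  | push : MTm A → A → MHd A → MHd A
  | pop  : A → MHd A → MHd A
end

namespace MHd
variable {A : Type}
/-- The number of binders of a marked head context. -/
def binders : MHd A → Nat
  | hole => 0
  | push _ _ H => binders H
  | pop _ H => binders H + 1
/-- The locations occurring along the spine of a marked head context. -/
def locs : MHd A → List A
  | hole => []
  | push _ a H => a :: locs H
  | pop a H => a :: locs H
end MHd

mutual
/-- Well-formedness of a marked term: every marked redex is a genuine
β-redex, i.e. its location does not occur in the intervening head context
(in de Bruijn style the freshness condition on binders is automatic). -/
def MTm.WF {A : Type} : MTm A → Prop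
  | .star => True
  | .var _ M => M.WF
  | .push N _ M => N.WF ∧ M.WF
  | .pop _ M => M.WF
  | .redex N a H M => a ∉ H.locs ∧ N.WF ∧ H.WF ∧ M.WF
def MHd.WF {A : Type} : MHd A → Prop
  | .hole => True
  | .push N _ H => N.WF ∧ H.WF
  | .pop _ H => H.WF
end

mutual
/-- The underlying (unmarked) term of a marked term. -/
def MTm.erase {A : Type} : MTm A → Tm A
  | .star => .star
  | .var n M => .var n M.erase
  | .push N a M => .push N.erase a M.erase
  | .pop a M => .pop a M.erase
  | .redex N a H M => .push N.erase a (H.erase.plug (.pop a M.erase))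
/-- The underlying head context of a marked head context. -/
def MHd.erase {A : Type} : MHd A → Hd A
  | .hole => .hole
  | .push N a H => .push N.erase a H.erase
  | .pop a H => .pop a H.erase
end

mutual
/-- The marked reduct `(M^X)_X`: the simultaneous contraction of all
marked redexes. -/
def MTm.reduct {A : Type} : MTm A → Tm A
  | .star => .star
  | .var n M => .var n M.reduct
  | .push N a M => .push N.reduct a M.reduct
  | .pop a M => .pop a M.reduct
  | .redex N _ H M =>
      H.reduct.plug (Tm.subst1 (Tm.rename (· + H.reduct.binders) N.reduct) M.reduct)
/-- The marked reduct of a marked head context. -/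
def MHd.reduct {A : Type} : MHd A → Hd A
  | .hole => .hole
  | .push N a H => .push N.reduct a H.reduct
  | .pop a H => .pop a H.reduct
end

mutual
/-- Renaming of de Bruijn indices in a marked term. -/
def MTm.rename {A : Type} (f : Nat → Nat) : MTm A → MTm A
  | .star => .star
  | .var n M => .var (f n) (M.rename f)
  | .push N a M => .push (N.rename f) a (M.rename f)
  | .pop a M => .pop a (M.rename (Tm.liftF f))
  | .redex N a H M =>
      .redex (N.rename f) a (H.rename f) (M.rename (Tm.liftF^[H.binders + 1] f))
/-- Renaming of de Bruijn indices in a marked head context. -/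
def MHd.rename {A : Type} (f : Nat → Nat) : MHd A → MHd A
  | .hole => .hole
  | .push N a H => .push (N.rename f) a (H.rename f)
  | .pop a H => .pop a (H.rename (Tm.liftF f))
end

/-- Capture-avoiding composition `N ; M` of marked terms. -/
def MTm.comp {A : Type} : MTm A → MTm A → MTm A
  | .star, P => P
  | .var n N, P => .var n (N.comp P)
  | .push Q a N, P => .push Q a (N.comp P)
  | .pop a N, P => .pop a (N.comp (P.rename Nat.succ))
  | .redex N a H M, P => .redex N a H (M.comp (P.rename (· + (H.binders + 1))))

/-- Lifting of a marked substitution under a binder. -/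
def MTm.liftS {A : Type} (σ : Nat → MTm A) : Nat → MTm A
  | 0 => .var 0 .star
  | n+1 => (σ n).rename Nat.succ

mutual
/-- Capture-avoiding simultaneous substitution of marked terms in a
marked term. -/
def MTm.subst {A : Type} (σ : Nat → MTm A) : MTm A → MTm A
  | .star => .star
  | .var n M => (σ n).comp (M.subst σ)
  | .push N a M => .push (N.subst σ) a (M.subst σ)
  | .pop a M => .pop a (M.subst (MTm.liftS σ))
  | .redex N a H M =>
      .redex (N.subst σ) a (H.subst σ) (M.subst (MTm.liftS^[H.binders + 1] σ))
/-- Capture-avoiding substitution in a marked head context. -/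
def MHd.subst {A : Type} (σ : Nat → MTm A) : MHd A → MHd A
  | .hole => .hole
  | .push N a H => .push (N.subst σ) a (H.subst σ)
  | .pop a H => .pop a (H.subst (MTm.liftS σ))
end

/-- Capture-avoiding substitution `{N/x}M` on marked terms. -/
def MTm.subst1 {A : Type} (N : MTm A) : MTm A → MTm A :=
  MTm.subst (fun n => match n with | 0 => N | n+1 => .var n .star)

/-- Plugging a marked term into the hole of a marked head context. -/
def MHd.plug {A : Type} : MHd A → MTm A → MTm A
  | .hole, M => M
  | .push N a H, M => MTm.push N a (H.plug M)
  | .pop a H, M => MTm.pop a (H.plug M)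

/-- The two (disjoint) markings `X` and `O`. -/
inductive Mark : Type
  | X : Mark
  | O : Mark

mutual
/-- Doubly marked FMC terms: terms carrying two disjoint markings `X` and `O`
of β-redexes, each marked redex labelled by the marking it belongs to. -/
inductive DTm (A : Type) : Type
  | star : DTm A
  | var  : Nat → DTm A → DTm A
  | push : DTm A → A → DTm A → DTm A
  | pop  : A → DTm A → DTm A
  | redex : Mark → DTm A → A → DHd A → DTm A → DTm A
/-- Head contexts of doubly marked terms. -/
inductive DHd (A : Type) : Type
  | hole : DHd A
  | push : DTm A → A → DHd A → DHd A
  | pop  : A → DHd A → DHd A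
end

namespace DHd
variable {A : Type}
/-- The number of binders of a doubly marked head context. -/
def binders : DHd A → Nat
  | hole => 0
  | push _ _ H => binders H
  | pop _ H => binders H + 1
end DHd

mutual
/-- Regard a doubly marked term as a (singly) marked term, marking all
redexes marked by either `X` or `O`: this realizes the combined marking `XO`. -/
def DTm.forget {A : Type} : DTm A → MTm A
  | .star => .star
  | .var n M => .var n M.forget
  | .push N a M => .push N.forget a M.forget
  | .pop a M => .pop a M.forget
  | .redex _ N a H M => .redex N.forget a H.forget M.forget
/-- Regard a doubly marked head context as a marked head context. -/
def DHd.forget {A : Type} : DHd A → MHd A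
  | .hole => .hole
  | .push N a H => .push N.forget a H.forget
  | .pop a H => .pop a H.forget
end

/-- Well-formedness of a doubly marked term: all marked redexes are genuine
β-redexes. -/
def DTm.WF {A : Type} (W : DTm A) : Prop := W.forget.WF

/-- The simultaneous contraction `M_{XO}` of all redexes marked by `X` or `O`. -/
def DTm.reductBoth {A : Type} (W : DTm A) : Tm A := W.forget.reduct

mutual
/-- Contract the `X`-marked redexes of a doubly marked term, preserving the
`O`-marking through the reduction: this is `M_X` carrying the marking `O`. -/
def DTm.reduceX {A : Type} : DTm A → MTm A
  | .star => .star
  | .var n M => .var n M.reduceX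
  | .push N a M => .push N.reduceX a M.reduceX
  | .pop a M => .pop a M.reduceX
  | .redex .O N a H M => .redex N.reduceX a H.reduceX M.reduceX
  | .redex .X N a H M =>
      H.reduceX.plug (MTm.subst1 (N.reduceX.rename (· + H.binders)) M.reduceX)
/-- Contract the `X`-marked redexes inside a doubly marked head context. -/
def DHd.reduceX {A : Type} : DHd A → MHd A
  | .hole => .hole
  | .push N a H => .push N.reduceX a H.reduceX
  | .pop a H => .pop a H.reduceX
end

/-!
Marked reduction is compatible with the syntactic operations: the reduct of a renaming,
composition, substitution or plugging of marked terms is the same operation applied to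
the reducts. Contracting the `X`-redexes first and the `O`-redexes afterwards therefore
agrees with contracting both at once, by structural induction: at an `X`-redex
`[N]a.H.a<x>.M`, the `O`-reduct of `H_X.{N_X/x}M_X` is `(H_X)_O.{(N_X)_O/x}(M_X)_O`,
which by induction is `H_{XO}.{N_{XO}/x}M_{XO}`.
-/

namespace Tm

variable {A : Type}

theorem liftF_comp (f g : Nat → Nat) : liftF (f ∘ g) = liftF f ∘ liftF g := by
  funext n; cases n <;> rfl

theorem liftF_iterate_apply_add (k : Nat) (f : Nat → Nat) (n : Nat) :
    (liftF^[k] f) (n + k) = f n + k := by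
  induction k with
  | zero => rfl
  | succ k ih =>
      rw [Function.iterate_succ_apply']
      exact congrArg (· + 1) ih

theorem rename_rename : (M : Tm A) → ∀ f g, rename f (rename g M) = rename (f ∘ g) M
  | .star, _, _ => rfl
  | .var n M, f, g => by simp [rename, rename_rename M]
  | .push N a M, f, g => by simp [rename, rename_rename N, rename_rename M]
  | .pop a M, f, g => by simp [rename, rename_rename M, liftF_comp]

theorem rename_eq_self : (M : Tm A) → ∀ f, (∀ n, f n = n) → rename f M = M
  | .star, _, _ => rfl
  | .var n M, f, h => by simp [rename, rename_eq_self M f h, h]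
  | .push N a M, f, h => by simp [rename, rename_eq_self N f h, rename_eq_self M f h]
  | .pop a M, f, h => by
      simp only [rename, pop.injEq, true_and]
      exact rename_eq_self M _ fun n => by cases n <;> simp [liftF, h]

theorem comp_star : (M : Tm A) → comp M star = M
  | .star => rfl
  | .var n M => by simp [comp, comp_star M]
  | .push N a M => by simp [comp, comp_star M]
  | .pop a M => by simp [comp, rename, comp_star M]

theorem rename_comp : (N : Tm A) → ∀ f P, rename f (comp N P) = comp (rename f N) (rename f P)
  | .star, _, _ => rfl
  | .var n N, f, P => by simp [comp, rename, rename_comp N]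
  | .push Q a N, f, P => by simp [comp, rename, rename_comp N]
  | .pop a N, f, P => by
      simp only [comp, rename, rename_comp N, rename_rename]
      rfl

theorem comp_assoc : (N : Tm A) → ∀ P Q, comp (comp N P) Q = comp N (comp P Q)
  | .star, _, _ => rfl
  | .var n N, P, Q => by simp [comp, comp_assoc N]
  | .push R a N, P, Q => by simp [comp, comp_assoc N]
  | .pop a N, P, Q => by simp [comp, comp_assoc N, rename_comp]

theorem liftS_comp_liftF (σ : Nat → Tm A) (f : Nat → Nat) :
    liftS σ ∘ liftF f = liftS (σ ∘ f) := by
  funext n; cases n <;> rfl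

theorem liftS_iterate_apply_add (k : Nat) (σ : Nat → Tm A) (n : Nat) :
    (liftS^[k] σ) (n + k) = rename (· + k) (σ n) := by
  induction k with
  | zero => exact (rename_eq_self (σ n) _ fun _ => rfl).symm
  | succ k ih =>
      rw [Function.iterate_succ_apply']
      change rename Nat.succ ((liftS^[k] σ) (n + k)) = _
      rw [ih, rename_rename]
      rfl

theorem subst_rename : (M : Tm A) → ∀ σ f, subst σ (rename f M) = subst (σ ∘ f) M
  | .star, _, _ => rfl
  | .var n M, σ, f => by simp [subst, rename, subst_rename M]
  | .push N a M, σ, f => by simp [subst, rename, subst_rename N, subst_rename M]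
  | .pop a M, σ, f => by simp [subst, rename, subst_rename M, liftS_comp_liftF]

theorem rename_liftS (f : Nat → Nat) (σ : Nat → Tm A) :
    (fun n => rename (liftF f) (liftS σ n)) = liftS (fun n => rename f (σ n)) := by
  funext n
  cases n with
  | zero => rfl
  | succ n => simp only [liftS, rename_rename]; rfl

theorem rename_subst : (M : Tm A) → ∀ f σ,
    rename f (subst σ M) = subst (fun n => rename f (σ n)) M
  | .star, _, _ => rfl
  | .var n M, f, σ => by simp [subst, rename_comp, rename_subst M]
  | .push N a M, f, σ => by simp [subst, rename, rename_subst N, rename_subst M]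
  | .pop a M, f, σ => by simp [subst, rename, rename_subst M, rename_liftS]

theorem subst_liftS_rename_succ (σ : Nat → Tm A) (P : Tm A) :
    subst (liftS σ) (rename Nat.succ P) = rename Nat.succ (subst σ P) := by
  rw [subst_rename, rename_subst]; rfl

theorem subst_comp : (N : Tm A) → ∀ σ P, subst σ (comp N P) = comp (subst σ N) (subst σ P)
  | .star, _, _ => rfl
  | .var n N, σ, P => by simp [comp, subst, subst_comp N, ← comp_assoc]
  | .push Q a N, σ, P => by simp [comp, subst, subst_comp N]
  | .pop a N, σ, P => by simp [comp, subst, subst_comp N, subst_liftS_rename_succ]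

theorem liftS_var_star : liftS (fun n => (var n star : Tm A)) = fun n => var n star := by
  funext n; cases n <;> rfl

theorem subst_var_star : (M : Tm A) → subst (fun n => var n star) M = M
  | .star => rfl
  | .var n M => by simp [subst, comp, subst_var_star M]
  | .push N a M => by simp [subst, subst_var_star N, subst_var_star M]
  | .pop a M => by simp [subst, liftS_var_star, subst_var_star M]

theorem liftS_subst (σ τ : Nat → Tm A) :
    liftS (fun n => subst σ (τ n)) = fun n => subst (liftS σ) (liftS τ n) := by
  funext n
  cases n with
  | zero => rfl
  | succ n => exact (subst_liftS_rename_succ σ (τ n)).symm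

theorem subst_subst : (M : Tm A) → ∀ σ τ,
    subst σ (subst τ M) = subst (fun n => subst σ (τ n)) M
  | .star, _, _ => rfl
  | .var n M, σ, τ => by simp [subst, subst_comp, subst_subst M]
  | .push N a M, σ, τ => by simp [subst, subst_subst N, subst_subst M]
  | .pop a M, σ, τ => by simp [subst, subst_subst M, ← liftS_subst]

theorem subst_subst1 (σ : Nat → Tm A) (N M : Tm A) :
    subst σ (subst1 N M) = subst1 (subst σ N) (subst (liftS σ) M) := by
  unfold subst1
  rw [subst_subst, subst_subst]
  congr 1
  funext n
  cases n with
  | zero => simp [subst, comp_star, liftS]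
  | succ n =>
      change comp (σ n) star = subst _ (rename Nat.succ (σ n))
      rw [comp_star, subst_rename]
      exact (subst_var_star (σ n)).symm

theorem rename_subst1 (f : Nat → Nat) (N M : Tm A) :
    rename f (subst1 N M) = subst1 (rename f N) (rename (liftF f) M) := by
  unfold subst1
  rw [rename_subst, subst_rename]
  congr 1
  funext n
  cases n <;> rfl

theorem subst1_comp (N M P : Tm A) :
    comp (subst1 N M) P = subst1 N (comp M (rename Nat.succ P)) := by
  unfold subst1
  rw [subst_comp, subst_rename]
  exact congrArg _ (subst_var_star P).symm

end Tm

namespace Hd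

variable {A : Type}

def rename (f : Nat → Nat) : Hd A → Hd A
  | .hole => .hole
  | .push N a H => .push (Tm.rename f N) a (rename f H)
  | .pop a H => .pop a (rename (Tm.liftF f) H)

def subst (σ : Nat → Tm A) : Hd A → Hd A
  | .hole => .hole
  | .push N a H => .push (Tm.subst σ N) a (subst σ H)
  | .pop a H => .pop a (subst (Tm.liftS σ) H)

theorem binders_rename : (H : Hd A) → ∀ f, (rename f H).binders = H.binders
  | .hole, _ => rfl
  | .push _ _ H, f => binders_rename H f
  | .pop _ H, _ => congrArg (· + 1) (binders_rename H _)

theorem binders_subst : (H : Hd A) → ∀ σ, (subst σ H).binders = H.binders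
  | .hole, _ => rfl
  | .push _ _ H, σ => binders_subst H σ
  | .pop _ H, _ => congrArg (· + 1) (binders_subst H _)

theorem rename_plug : (H : Hd A) → ∀ f Q,
    Tm.rename f (H.plug Q) = (rename f H).plug (Tm.rename (Tm.liftF^[H.binders] f) Q)
  | .hole, _, _ => rfl
  | .push N a H, f, Q => by simp [plug, Tm.rename, rename, rename_plug H, binders]
  | .pop a H, f, Q => by
      simp only [plug, Tm.rename, rename, rename_plug H, binders]
      rw [Function.iterate_succ_apply]

theorem subst_plug : (H : Hd A) → ∀ σ Q,
    Tm.subst σ (H.plug Q) = (subst σ H).plug (Tm.subst (Tm.liftS^[H.binders] σ) Q)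
  | .hole, _, _ => rfl
  | .push N a H, σ, Q => by simp [plug, Tm.subst, subst, subst_plug H, binders]
  | .pop a H, σ, Q => by
      simp only [plug, Tm.subst, subst, subst_plug H, binders]
      rw [Function.iterate_succ_apply]

theorem plug_comp : (H : Hd A) → ∀ Q P,
    Tm.comp (H.plug Q) P = H.plug (Tm.comp Q (Tm.rename (· + H.binders) P))
  | .hole, Q, P => congrArg (Tm.comp Q) (Tm.rename_eq_self P _ fun _ => rfl).symm
  | .push N a H, Q, P => by simp [plug, Tm.comp, plug_comp H, binders]
  | .pop a H, Q, P => by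
      simp only [plug, Tm.comp, plug_comp H, binders, Tm.rename_rename]
      congr 4
      funext n
      change n + 1 + H.binders = n + (H.binders + 1)
      omega

end Hd

variable {A : Type}

theorem MHd.binders_reduct : (H : MHd A) → H.reduct.binders = H.binders
  | .hole => rfl
  | .push _ _ H => binders_reduct H
  | .pop _ H => congrArg (· + 1) (binders_reduct H)

theorem MHd.reduct_plug : (H : MHd A) → ∀ M : MTm A, (H.plug M).reduct = H.reduct.plug M.reduct
  | .hole, _ => rfl
  | .push N a H, M => by simp [MHd.plug, MTm.reduct, MHd.reduct, Hd.plug, reduct_plug H]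
  | .pop a H, M => by simp [MHd.plug, MTm.reduct, MHd.reduct, Hd.plug, reduct_plug H]

mutual

theorem MTm.reduct_rename : (M : MTm A) → ∀ f, (M.rename f).reduct = Tm.rename f M.reduct
  | .star, _ => rfl
  | .var n M, f => by simp [MTm.rename, MTm.reduct, Tm.rename, MTm.reduct_rename M]
  | .push N a M, f => by
      simp [MTm.rename, MTm.reduct, Tm.rename, MTm.reduct_rename N, MTm.reduct_rename M]
  | .pop a M, f => by simp [MTm.rename, MTm.reduct, Tm.rename, MTm.reduct_rename M]
  | .redex N a H M, f => by
      simp only [MTm.rename, MTm.reduct, MTm.reduct_rename N, MTm.reduct_rename M,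
        MHd.reduct_rename H, Hd.binders_rename, MHd.binders_reduct]
      rw [Hd.rename_plug, Tm.rename_subst1, MHd.binders_reduct, Function.iterate_succ_apply',
        Tm.rename_rename, Tm.rename_rename]
      congr 3
      funext n
      exact (Tm.liftF_iterate_apply_add H.binders f n).symm

theorem MHd.reduct_rename : (H : MHd A) → ∀ f, (H.rename f).reduct = Hd.rename f H.reduct
  | .hole, _ => rfl
  | .push N a H, f => by
      simp [MHd.rename, MHd.reduct, Hd.rename, MTm.reduct_rename N, MHd.reduct_rename H]
  | .pop a H, f => by simp [MHd.rename, MHd.reduct, Hd.rename, MHd.reduct_rename H]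

end

theorem MTm.reduct_comp : (N : MTm A) → ∀ P : MTm A, (N.comp P).reduct = Tm.comp N.reduct P.reduct
  | .star, _ => rfl
  | .var n N, P => by simp [MTm.comp, MTm.reduct, Tm.comp, MTm.reduct_comp N]
  | .push Q a N, P => by simp [MTm.comp, MTm.reduct, Tm.comp, MTm.reduct_comp N]
  | .pop a N, P => by
      simp [MTm.comp, MTm.reduct, Tm.comp, MTm.reduct_comp N, MTm.reduct_rename]
  | .redex N a H M, P => by
      simp only [MTm.comp, MTm.reduct, MTm.reduct_comp M, MTm.reduct_rename P]
      rw [Hd.plug_comp, Tm.subst1_comp, MHd.binders_reduct, Tm.rename_rename]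
      rfl

theorem MTm.reduct_liftS_iterate (j : Nat) (σ : Nat → MTm A) :
    (fun n => ((MTm.liftS^[j] σ) n).reduct) = Tm.liftS^[j] (fun n => (σ n).reduct) := by
  induction j with
  | zero => rfl
  | succ j ih =>
      rw [Function.iterate_succ_apply', Function.iterate_succ_apply', ← ih]
      funext n
      cases n with
      | zero => rfl
      | succ n => exact MTm.reduct_rename _ _

theorem MTm.reduct_liftS (σ : Nat → MTm A) :
    (fun n => (MTm.liftS σ n).reduct) = Tm.liftS (fun n => (σ n).reduct) :=
  MTm.reduct_liftS_iterate 1 σ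

mutual

theorem MTm.reduct_subst : (M : MTm A) → ∀ σ : Nat → MTm A,
    (M.subst σ).reduct = Tm.subst (fun n => (σ n).reduct) M.reduct
  | .star, _ => rfl
  | .var n M, σ => by
      simp [MTm.subst, MTm.reduct, Tm.subst, MTm.reduct_comp, MTm.reduct_subst M]
  | .push N a M, σ => by
      simp [MTm.subst, MTm.reduct, Tm.subst, MTm.reduct_subst N, MTm.reduct_subst M]
  | .pop a M, σ => by
      simp only [MTm.subst, MTm.reduct, Tm.subst, MTm.reduct_subst M]
      rw [MTm.reduct_liftS σ]
  | .redex N a H M, σ => by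
      simp only [MTm.subst, MTm.reduct, MTm.reduct_subst N, MTm.reduct_subst M,
        MHd.reduct_subst H, Hd.binders_subst, MHd.binders_reduct, MTm.reduct_liftS_iterate]
      rw [Hd.subst_plug, Tm.subst_subst1, MHd.binders_reduct, Function.iterate_succ_apply',
        Tm.subst_rename, Tm.rename_subst]
      congr 3
      funext n
      exact (Tm.liftS_iterate_apply_add H.binders (fun n => (σ n).reduct) n).symm

theorem MHd.reduct_subst : (H : MHd A) → ∀ σ : Nat → MTm A,
    (H.subst σ).reduct = Hd.subst (fun n => (σ n).reduct) H.reduct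
  | .hole, _ => rfl
  | .push N a H, σ => by
      simp [MHd.subst, MHd.reduct, Hd.subst, MTm.reduct_subst N, MHd.reduct_subst H]
  | .pop a H, σ => by
      simp only [MHd.subst, MHd.reduct, Hd.subst, MHd.reduct_subst H]
      rw [MTm.reduct_liftS σ]

end

theorem MTm.reduct_subst1 (N M : MTm A) :
    (MTm.subst1 N M).reduct = Tm.subst1 N.reduct M.reduct := by
  unfold MTm.subst1 Tm.subst1
  rw [MTm.reduct_subst]
  congr 1
  funext n
  cases n <;> rfl

theorem DHd.binders_forget : (H : DHd A) → H.forget.binders = H.binders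
  | .hole => rfl
  | .push _ _ H => binders_forget H
  | .pop _ H => congrArg (· + 1) (binders_forget H)

mutual

theorem DTm.reduct_reduceX : (W : DTm A) → W.reduceX.reduct = W.forget.reduct
  | .star => rfl
  | .var n M => by simp [DTm.reduceX, DTm.forget, MTm.reduct, DTm.reduct_reduceX M]
  | .push N a M => by
      simp [DTm.reduceX, DTm.forget, MTm.reduct, DTm.reduct_reduceX N, DTm.reduct_reduceX M]
  | .pop a M => by simp [DTm.reduceX, DTm.forget, MTm.reduct, DTm.reduct_reduceX M]
  | .redex .O N a H M => by
      simp only [DTm.reduceX, DTm.forget, MTm.reduct, DTm.reduct_reduceX N,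
        DTm.reduct_reduceX M, DHd.reduct_reduceX H]
  | .redex .X N a H M => by
      simp only [DTm.reduceX, DTm.forget, MTm.reduct, MHd.reduct_plug, MTm.reduct_subst1,
        MTm.reduct_rename, DTm.reduct_reduceX N, DTm.reduct_reduceX M, DHd.reduct_reduceX H,
        MHd.binders_reduct, DHd.binders_forget]

theorem DHd.reduct_reduceX : (H : DHd A) → H.reduceX.reduct = H.forget.reduct
  | .hole => rfl
  | .push N a H => by
      simp [DHd.reduceX, DHd.forget, MHd.reduct, DTm.reduct_reduceX N, DHd.reduct_reduceX H]
  | .pop a H => by simp [DHd.reduceX, DHd.forget, MHd.reduct, DHd.reduct_reduceX H]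

end

/-- For a doubly marked term, contracting the `X`-marked redexes first
(preserving the `O`-marking) and then the `O`-marked ones gives the same
result as contracting all marked redexes simultaneously:
`(M_X)_O = M_{XO}`. -/
theorem fmc_marked_reduction_composes {A : Type} (W : DTm A) (hW : W.WF) :
    W.reduceX.reduct = W.reductBoth :=
  DTm.reduct_reduceX W
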